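/- The group G(Ẽ₈^{(1,1)}) defined by the elliptic Dynkin presentation of type Ẽ₈^{(1,1)} is isomorphic to the group G'(Ẽ₈^{(1,1)}) defined by the new presentation with infinitely many generators tᵢ (i ∈ ℤ). -/

import Mathlib

/-!
In `G`, put `τ = t₁t₀` and `Tₙ = φⁿ(t₀)` for the permutation `φ(x) = τx⁻¹`, so that
`T₀ = t₀`, `T₁ = t₁` and `TₙTₙ₋₁ = τ` for all `n`; conversely, in `G'` the relations
`tₙtₙ₋₁ = t₁t₀` force `tₙ = φⁿ(t₀)`. Hence `tₙ ↦ Tₙ` and `tᵢ ↦ tᵢ` are mutually inverse once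
both respect the relations. The key identity: if `a` and `b` both braid with `s`, then
`bab⁻¹` braids with `s` if and only if `(ba)s(ba)s = s(ba)s(ba)`. Read forwards, it propagates
the braid relations from `T₀, T₁` to every `Tₙ`; read backwards, it recovers the elliptic
relation in `G'` from the braid relation of `t₂ = t₁t₀t₁⁻¹`.
-/

namespace EllipticE8

/-- Generators of `G(Ẽ₈^{(1,1)})`: `Sum.inl i` is `tᵢ` (`i ∈ {0,1}`),
`Sum.inr j` is `s_(j+1)` (so `Sum.inr 0` is `s₁`, ..., `Sum.inr 7` is `s₈`). -/
abbrev GenG : Type := Fin 2 ⊕ Fin 8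

/-- Generators of `G'(Ẽ₈^{(1,1)})`: `Sum.inl i` is `tᵢ` (`i ∈ ℤ`),
`Sum.inr j` is `s_(j+1)`. -/
abbrev GenG' : Type := ℤ ⊕ Fin 8

/-- The braid relator `(aba)⁻¹(bab)` encoding the relation `aba = bab`. -/
def br {α : Type} (a b : FreeGroup α) : FreeGroup α := (a * b * a)⁻¹ * (b * a * b)

/-- The commutation relator `(ab)⁻¹(ba)` encoding the relation `ab = ba`. -/
def cm {α : Type} (a b : FreeGroup α) : FreeGroup α := (a * b)⁻¹ * (b * a)

/-- The pairs of (0-indexed) `s`-generators joined by an edge in the diagram,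
i.e. satisfying a braid relation: (s₂,s₄), (s₃,s₅), (s₅,s₆), (s₆,s₇), (s₇,s₈). -/
def braidPairs : List (Fin 8 × Fin 8) := [(1, 3), (2, 4), (4, 5), (5, 6), (6, 7)]

def tG (i : Fin 2) : FreeGroup GenG := FreeGroup.of (Sum.inl i)
def sG (j : Fin 8) : FreeGroup GenG := FreeGroup.of (Sum.inr j)

/-- Relators of the elliptic Dynkin presentation of `G(Ẽ₈^{(1,1)})`:
braid relations between `t₀, t₁` and `s₁, s₂, s₃`, braid relations along the edges
of the `s`-part of the diagram, the elliptic relations for `s₁, s₂, s₃`, and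
commutation relations for all remaining pairs of distinct generators except `{t₀,t₁}`. -/
def relsG : Set (FreeGroup GenG) :=
  { r | (∃ i : Fin 2, ∃ j : Fin 8, j.val < 3 ∧ r = br (tG i) (sG j)) ∨
        (∃ p ∈ braidPairs, r = br (sG p.1) (sG p.2)) ∨
        (∃ j : Fin 8, j.val < 3 ∧
          r = (sG j * tG 1 * tG 0 * sG j * tG 1 * tG 0)⁻¹ *
              (tG 1 * tG 0 * sG j * tG 1 * tG 0 * sG j)) ∨
        (∃ i j : Fin 8, i ≠ j ∧ (i, j) ∉ braidPairs ∧ (j, i) ∉ braidPairs ∧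
          r = cm (sG i) (sG j)) ∨
        (∃ i : Fin 2, ∃ j : Fin 8, 3 ≤ j.val ∧ r = cm (tG i) (sG j)) }

def tG' (i : ℤ) : FreeGroup GenG' := FreeGroup.of (Sum.inl i)
def sG' (j : Fin 8) : FreeGroup GenG' := FreeGroup.of (Sum.inr j)

/-- Relators of the new presentation of `G'(Ẽ₈^{(1,1)})`: braid relations between
every `tᵢ` (`i ∈ ℤ`) and `s₁, s₂, s₃`, the relations `tᵢtᵢ₋₁ = tⱼtⱼ₋₁`, braid relations
along the edges of the `s`-part of the diagram, commutation relations between the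
remaining pairs of distinct `s`-generators, and commutation of every `tᵢ` with
`s₄, …, s₈`. -/
def relsG' : Set (FreeGroup GenG') :=
  { r | (∃ i : ℤ, ∃ j : Fin 8, j.val < 3 ∧ r = br (tG' i) (sG' j)) ∨
        (∃ i j : ℤ, r = (tG' i * tG' (i - 1))⁻¹ * (tG' j * tG' (j - 1))) ∨
        (∃ p ∈ braidPairs, r = br (sG' p.1) (sG' p.2)) ∨
        (∃ i j : Fin 8, i ≠ j ∧ (i, j) ∉ braidPairs ∧ (j, i) ∉ braidPairs ∧
          r = cm (sG' i) (sG' j)) ∨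
        (∃ i : ℤ, ∃ j : Fin 8, 3 ≤ j.val ∧ r = cm (tG' i) (sG' j)) }

end EllipticE8

section BraidRel

variable {G : Type*} [Group G] {a b s τ : G}

def BraidRel (a b : G) : Prop := a * b * a = b * a * b

theorem BraidRel.symm (h : BraidRel a b) : BraidRel b a := Eq.symm h

theorem BraidRel.inv (h : BraidRel a b) : BraidRel a⁻¹ b⁻¹ := by
  simpa only [BraidRel, mul_inv_rev, mul_assoc] using congrArg (·⁻¹) h

theorem BraidRel.inv_mul_mul (h : BraidRel a b) : a⁻¹ * b * a = b * a * b⁻¹ :=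
  calc a⁻¹ * b * a = a⁻¹ * (b * a * b) * b⁻¹ := by group
    _ = a⁻¹ * (a * b * a) * b⁻¹ := by rw [h]
    _ = b * a * b⁻¹ := by group

theorem braidRel_conj_iff (ha : BraidRel a s) (hb : BraidRel b s) :
    BraidRel (b * a * b⁻¹) s ↔ b * a * s * (b * a) * s = s * (b * a) * s * (b * a) := by
  have hbs := hb.inv_mul_mul
  have hsa := ha.symm.inv_mul_mul
  have hl : b * a * b⁻¹ * s * (b * a * b⁻¹) = b * a * s * (b * a) * s * (a⁻¹ * s⁻¹ * b⁻¹) :=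
    calc b * a * b⁻¹ * s * (b * a * b⁻¹) = b * a * (b⁻¹ * s * b) * a * b⁻¹ := by group
      _ = b * a * (s * b * s⁻¹) * a * b⁻¹ := by rw [hbs]
      _ = b * a * s * b * (s⁻¹ * a * s) * s⁻¹ * b⁻¹ := by group
      _ = b * a * s * b * (a * s * a⁻¹) * s⁻¹ * b⁻¹ := by rw [hsa]
      _ = b * a * s * (b * a) * s * (a⁻¹ * s⁻¹ * b⁻¹) := by group
  have hr : s * (b * a * b⁻¹) * s = s * (b * a) * s * (b * a) * (a⁻¹ * s⁻¹ * b⁻¹) :=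
    calc s * (b * a * b⁻¹) * s = s * (b * a) * (b⁻¹ * s * b) * b⁻¹ := by group
      _ = s * (b * a) * (s * b * s⁻¹) * b⁻¹ := by rw [hbs]
      _ = s * (b * a) * s * (b * a) * (a⁻¹ * s⁻¹ * b⁻¹) := by group
  rw [BraidRel, hl, hr, mul_left_inj]

theorem BraidRel.conj (ha : BraidRel a s) (hb : BraidRel b s) (hτ : b * a = τ)
    (hE : τ * s * τ * s = s * τ * s * τ) : BraidRel (b * a * b⁻¹) s :=
  (braidRel_conj_iff ha hb).2 (hτ ▸ hE)

theorem BraidRel.inv_conj (ha : BraidRel a s) (hb : BraidRel b s) (hτ : b * a = τ)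
    (hE : τ * s * τ * s = s * τ * s * τ) : BraidRel (a⁻¹ * b * a) s := by
  have hE' : τ⁻¹ * s⁻¹ * τ⁻¹ * s⁻¹ = s⁻¹ * τ⁻¹ * s⁻¹ * τ⁻¹ := by
    simpa only [mul_inv_rev, mul_assoc] using congrArg (·⁻¹) hE.symm
  have h := hb.inv.conj ha.inv (by rw [← mul_inv_rev, hτ]) hE'
  simpa only [BraidRel, mul_inv_rev, inv_inv, mul_assoc] using h.inv

end BraidRel

section MulInvPerm

open Equiv

variable {α : Type*}

theorem Equiv.Perm.zpow_add_one_apply (f : Perm α) (n : ℤ) (x : α) :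
    (f ^ (n + 1)) x = f ((f ^ n) x) := by
  rw [add_comm, zpow_add, zpow_one, Perm.mul_apply]

theorem Equiv.Perm.zpow_sub_one_apply (f : Perm α) (n : ℤ) (x : α) :
    (f ^ (n - 1)) x = f⁻¹ ((f ^ n) x) := by
  rw [sub_eq_neg_add, zpow_add, zpow_neg_one, Perm.mul_apply]

theorem Equiv.Perm.eq_zpow_apply_of_forall_add_one {f : Perm α} {u : ℤ → α}
    (hu : ∀ n, u (n + 1) = f (u n)) (n : ℤ) : u n = (f ^ n) (u 0) := by
  induction n using Int.induction_on with
  | zero => rfl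
  | succ k ih => rw [hu, ih, Perm.zpow_add_one_apply]
  | pred k ih =>
    rw [Perm.zpow_sub_one_apply, ← ih, Perm.eq_inv_iff_eq, ← hu, sub_add_cancel]

theorem Equiv.Perm.zpow_apply_mem {f : Perm α} {S : Set α} (hf : ∀ x ∈ S, f x ∈ S)
    (hf' : ∀ x ∈ S, f⁻¹ x ∈ S) (n : ℤ) {x : α} (hx : x ∈ S) : (f ^ n) x ∈ S := by
  induction n using Int.induction_on with
  | zero => exact hx
  | succ k ih => rw [Perm.zpow_add_one_apply]; exact hf _ ih
  | pred k ih => rw [Perm.zpow_sub_one_apply]; exact hf' _ ih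

variable {G : Type*} [Group G]

def mulInvPerm (τ : G) : Perm G where
  toFun x := τ * x⁻¹
  invFun x := x⁻¹ * τ
  left_inv x := by group
  right_inv x := by group

@[simp]
theorem mulInvPerm_apply (τ x : G) : mulInvPerm τ x = τ * x⁻¹ := rfl

@[simp]
theorem mulInvPerm_inv_apply (τ x : G) : (mulInvPerm τ)⁻¹ x = x⁻¹ * τ := rfl

theorem mulInvPerm_zpow_add_one_apply (τ x : G) (n : ℤ) :
    (mulInvPerm τ ^ (n + 1)) x * (mulInvPerm τ ^ n) x = τ := by
  rw [Perm.zpow_add_one_apply, mulInvPerm_apply, inv_mul_cancel_right]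

theorem map_mulInvPerm_zpow_apply {H : Type*} [Group H] (φ : G →* H) (τ x : G) (n : ℤ) :
    φ ((mulInvPerm τ ^ n) x) = (mulInvPerm (φ τ) ^ n) (φ x) :=
  Perm.eq_zpow_apply_of_forall_add_one (u := fun n ↦ φ ((mulInvPerm τ ^ n) x))
    (fun n ↦ by simp only [Perm.zpow_add_one_apply, mulInvPerm_apply, map_mul, map_inv]) n

theorem commute_mulInvPerm_zpow_apply {τ x s : G} (hτ : Commute τ s) (hx : Commute x s)
    (n : ℤ) : Commute ((mulInvPerm τ ^ n) x) s :=
  Perm.zpow_apply_mem (S := {y | Commute y s}) (fun _ hy ↦ hτ.mul_left hy.inv_left)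
    (fun _ hy ↦ hy.inv_left.mul_left hτ) n hx

theorem braidRel_mulInvPerm_zpow_apply {τ x s : G} (hE : τ * s * τ * s = s * τ * s * τ)
    (h₀ : BraidRel x s) (h₁ : BraidRel (τ * x⁻¹) s) (n : ℤ) :
    BraidRel ((mulInvPerm τ ^ n) x) s := by
  let S : Set G := {y | BraidRel y s ∧ BraidRel (τ * y⁻¹) s}
  have hf : ∀ y ∈ S, mulInvPerm τ y ∈ S := by
    rintro y ⟨hy, hy'⟩
    refine ⟨hy', ?_⟩
    rw [mulInvPerm_apply]
    convert hy.conj hy' (inv_mul_cancel_right τ y) hE using 1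
    group
  have hf' : ∀ y ∈ S, (mulInvPerm τ)⁻¹ y ∈ S := by
    rintro y ⟨hy, hy'⟩
    refine ⟨?_, ?_⟩ <;> rw [mulInvPerm_inv_apply]
    · convert hy.inv_conj hy' (inv_mul_cancel_right τ y) hE using 1
      group
    · convert hy using 1
      group
  exact (Perm.zpow_apply_mem hf hf' n ⟨h₀, h₁⟩).1

end MulInvPerm

namespace EllipticE8

section Relators

variable {α : Type} {H : Type*} [Group H] (φ : FreeGroup α →* H) (a b : FreeGroup α)

theorem map_br_eq_one_iff : φ (br a b) = 1 ↔ BraidRel (φ a) (φ b) := by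
  rw [br, map_mul, map_inv, inv_mul_eq_one, map_mul, map_mul, map_mul, map_mul]
  rfl

theorem map_cm_eq_one_iff : φ (cm a b) = 1 ↔ Commute (φ a) (φ b) := by
  rw [cm, map_mul, map_inv, inv_mul_eq_one, map_mul, map_mul]
  rfl

end Relators

def t (i : Fin 2) : PresentedGroup relsG := .of (.inl i)
def s (j : Fin 8) : PresentedGroup relsG := .of (.inr j)
def t' (i : ℤ) : PresentedGroup relsG' := .of (.inl i)
def s' (j : Fin 8) : PresentedGroup relsG' := .of (.inr j)

section RelationsG

open PresentedGroup

theorem braidRel_t_s {j : Fin 8} (hj : j.val < 3) (i : Fin 2) : BraidRel (t i) (s j) :=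
  (map_br_eq_one_iff _ _ _).1 (one_of_mem (Or.inl ⟨i, j, hj, rfl⟩))

theorem braidRel_s_s {p : Fin 8 × Fin 8} (hp : p ∈ braidPairs) : BraidRel (s p.1) (s p.2) :=
  (map_br_eq_one_iff _ _ _).1 (one_of_mem (Or.inr (Or.inl ⟨p, hp, rfl⟩)))

theorem elliptic_t_s {j : Fin 8} (hj : j.val < 3) :
    t 1 * t 0 * s j * (t 1 * t 0) * s j = s j * (t 1 * t 0) * s j * (t 1 * t 0) := by
  have h := mk_eq_mk_of_inv_mul_mem (rels := relsG) (Or.inr (Or.inr (Or.inl ⟨j, hj, rfl⟩)))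
  simp only [map_mul, mul_assoc] at h ⊢
  exact h.symm

theorem commute_s_s {i j : Fin 8} (hij : i ≠ j) (h₁ : (i, j) ∉ braidPairs)
    (h₂ : (j, i) ∉ braidPairs) : Commute (s i) (s j) :=
  (map_cm_eq_one_iff _ _ _).1
    (one_of_mem (Or.inr (Or.inr (Or.inr (Or.inl ⟨i, j, hij, h₁, h₂, rfl⟩)))))

theorem commute_t_s {j : Fin 8} (hj : 3 ≤ j.val) (i : Fin 2) : Commute (t i) (s j) :=
  (map_cm_eq_one_iff _ _ _).1 (one_of_mem (Or.inr (Or.inr (Or.inr (Or.inr ⟨i, j, hj, rfl⟩)))))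

end RelationsG

section RelationsG'

open PresentedGroup

theorem braidRel_t'_s' {j : Fin 8} (hj : j.val < 3) (i : ℤ) : BraidRel (t' i) (s' j) :=
  (map_br_eq_one_iff _ _ _).1 (one_of_mem (Or.inl ⟨i, j, hj, rfl⟩))

theorem t'_mul_t'_sub_one (n : ℤ) : t' n * t' (n - 1) = t' 1 * t' 0 := by
  have h := mk_eq_mk_of_inv_mul_mem (rels := relsG') (Or.inr (Or.inl ⟨n, 1, rfl⟩))
  simp only [map_mul, sub_self] at h
  exact h

theorem braidRel_s'_s' {p : Fin 8 × Fin 8} (hp : p ∈ braidPairs) :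
    BraidRel (s' p.1) (s' p.2) :=
  (map_br_eq_one_iff _ _ _).1 (one_of_mem (Or.inr (Or.inr (Or.inl ⟨p, hp, rfl⟩))))

theorem commute_s'_s' {i j : Fin 8} (hij : i ≠ j) (h₁ : (i, j) ∉ braidPairs)
    (h₂ : (j, i) ∉ braidPairs) : Commute (s' i) (s' j) :=
  (map_cm_eq_one_iff _ _ _).1
    (one_of_mem (Or.inr (Or.inr (Or.inr (Or.inl ⟨i, j, hij, h₁, h₂, rfl⟩)))))

theorem commute_t'_s' {j : Fin 8} (hj : 3 ≤ j.val) (i : ℤ) : Commute (t' i) (s' j) :=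
  (map_cm_eq_one_iff _ _ _).1 (one_of_mem (Or.inr (Or.inr (Or.inr (Or.inr ⟨i, j, hj, rfl⟩)))))

theorem t'_eq_mulInvPerm_zpow_apply (n : ℤ) : t' n = (mulInvPerm (t' 1 * t' 0) ^ n) (t' 0) :=
  Equiv.Perm.eq_zpow_apply_of_forall_add_one (fun k ↦ by
    rw [mulInvPerm_apply, eq_mul_inv_iff_mul_eq, ← t'_mul_t'_sub_one (k + 1),
      add_sub_cancel_right]) n

theorem elliptic_t'_s' {j : Fin 8} (hj : j.val < 3) :
    t' 1 * t' 0 * s' j * (t' 1 * t' 0) * s' j = s' j * (t' 1 * t' 0) * s' j * (t' 1 * t' 0) := by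
  have ht'₂ : t' 2 = t' 1 * t' 0 * (t' 1)⁻¹ :=
    eq_mul_inv_of_mul_eq (t'_mul_t'_sub_one 2)
  exact (braidRel_conj_iff (braidRel_t'_s' hj 0) (braidRel_t'_s' hj 1)).1
    (ht'₂ ▸ braidRel_t'_s' hj 2)

end RelationsG'

def T (n : ℤ) : PresentedGroup relsG := (mulInvPerm (t 1 * t 0) ^ n) (t 0)

theorem T_zero : T 0 = t 0 := rfl

theorem T_one : T 1 = t 1 := by
  rw [T, zpow_one, mulInvPerm_apply, mul_inv_cancel_right]

theorem T_mul_T_sub_one (n : ℤ) : T n * T (n - 1) = t 1 * t 0 := by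
  unfold T
  simpa only [sub_add_cancel] using mulInvPerm_zpow_add_one_apply (t 1 * t 0) (t 0) (n - 1)

theorem braidRel_T_s {j : Fin 8} (hj : j.val < 3) (n : ℤ) : BraidRel (T n) (s j) :=
  braidRel_mulInvPerm_zpow_apply (elliptic_t_s hj) (braidRel_t_s hj 0)
    (by rw [mul_inv_cancel_right]; exact braidRel_t_s hj 1) n

theorem commute_T_s {j : Fin 8} (hj : 3 ≤ j.val) (n : ℤ) : Commute (T n) (s j) :=
  commute_mulInvPerm_zpow_apply ((commute_t_s hj 1).mul_left (commute_t_s hj 0))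
    (commute_t_s hj 0) n

def toG' : PresentedGroup relsG →* PresentedGroup relsG' :=
  PresentedGroup.toGroup (rels := relsG) (f := Sum.elim (fun i : Fin 2 ↦ t' i) s') <| by
    rintro r (⟨i, j, hj, rfl⟩ | ⟨p, hp, rfl⟩ | ⟨j, hj, rfl⟩ | ⟨i, j, hij, h₁, h₂, rfl⟩ |
      ⟨i, j, hj, rfl⟩) <;>
    simp only [map_br_eq_one_iff, map_cm_eq_one_iff, map_mul, map_inv, inv_mul_eq_one, tG, sG,
      FreeGroup.lift_apply_of, Sum.elim_inl, Sum.elim_inr, Fin.val_zero, Fin.val_one,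
      Nat.cast_zero, Nat.cast_one]
    exacts [braidRel_t'_s' hj i, braidRel_s'_s' hp,
      by simpa only [mul_assoc] using (elliptic_t'_s' hj).symm,
      commute_s'_s' hij h₁ h₂, commute_t'_s' hj i]

def ofG' : PresentedGroup relsG' →* PresentedGroup relsG :=
  PresentedGroup.toGroup (rels := relsG') (f := Sum.elim T s) <| by
    rintro r (⟨i, j, hj, rfl⟩ | ⟨i, j, rfl⟩ | ⟨p, hp, rfl⟩ | ⟨i, j, hij, h₁, h₂, rfl⟩ |
      ⟨i, j, hj, rfl⟩) <;>
    simp only [map_br_eq_one_iff, map_cm_eq_one_iff, map_mul, map_inv, inv_mul_eq_one, tG', sG',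
      FreeGroup.lift_apply_of, Sum.elim_inl, Sum.elim_inr, T_mul_T_sub_one]
    exacts [braidRel_T_s hj i, braidRel_s_s hp, commute_s_s hij h₁ h₂, commute_T_s hj i]

theorem toG'_t (i : Fin 2) : toG' (t i) = t' i := PresentedGroup.toGroup.of _

theorem toG'_s (j : Fin 8) : toG' (s j) = s' j := PresentedGroup.toGroup.of _

theorem ofG'_t' (n : ℤ) : ofG' (t' n) = T n := PresentedGroup.toGroup.of _

theorem ofG'_s' (j : Fin 8) : ofG' (s' j) = s j := PresentedGroup.toGroup.of _

theorem toG'_T (n : ℤ) : toG' (T n) = t' n := by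
  rw [T, map_mulInvPerm_zpow_apply, map_mul, toG'_t, toG'_t, t'_eq_mulInvPerm_zpow_apply n,
    Fin.val_zero, Fin.val_one, Nat.cast_zero, Nat.cast_one]

theorem ofG'_comp_toG' : ofG'.comp toG' = MonoidHom.id _ := by
  refine PresentedGroup.ext fun x ↦ ?_
  rcases x with i | j
  · change ofG' (toG' (t i)) = t i
    rw [toG'_t, ofG'_t']
    fin_cases i
    exacts [T_zero, T_one]
  · exact (congrArg ofG' (toG'_s j)).trans (ofG'_s' j)

theorem toG'_comp_ofG' : toG'.comp ofG' = MonoidHom.id _ := by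
  refine PresentedGroup.ext fun x ↦ ?_
  rcases x with n | j
  · exact (congrArg toG' (ofG'_t' n)).trans (toG'_T n)
  · exact (congrArg toG' (ofG'_s' j)).trans (toG'_s j)

theorem G_iso_G' : Nonempty (PresentedGroup relsG ≃* PresentedGroup relsG') :=
  ⟨toG'.toMulEquiv ofG' ofG'_comp_toG' toG'_comp_ofG'⟩

end EllipticE8
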